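/- The stopping time τ of the two-phase test satisfies, for every n ≥ 1, P₁(τ > n) ≤ e^{−D(P^(λ₂)‖P₁)·n} ≤ e^{−γn} and P₂(τ > n) ≤ e^{−D(P^(λ₁)‖P₂)·n} ≤ e^{−γn}; in particular the two-phase test is a γ-almost-fixed-length test with τ bounded by (k+1)n. -/

import Mathlib

open Real Filter Finset MeasureTheory
open scoped Classical

variable {𝒳 : Type*} [Fintype 𝒳] [DecidableEq 𝒳] [Nonempty 𝒳]

/-- Kullback–Leibler divergence `D(Q‖P)` between pmfs on a finite alphabet. -/
noncomputable def kl (Q P : 𝒳 → ℝ) : ℝ :=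
  ∑ x, Q x * Real.log (Q x / P x)

/-- The `λ`-tilted distribution `P^(λ)` of `P₁` and `P₂`. -/
noncomputable def tilt (P₁ P₂ : 𝒳 → ℝ) (l : ℝ) : 𝒳 → ℝ :=
  fun x => P₁ x ^ (1 - l) * P₂ x ^ l / ∑ a, P₁ a ^ (1 - l) * P₂ a ^ l

/-- Probability of a set of length-`N` sample paths under i.i.d. sampling from `P`. -/
noncomputable def prodProb (P : 𝒳 → ℝ) {N : ℕ} (S : Set (Fin N → 𝒳)) : ℝ :=
  ∑ ω : Fin N → 𝒳, S.indicator (fun ω' => ∏ i, P (ω' i)) ω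

/-- The fixed-length error-exponent region `R_FD`. -/
def RFD (P₁ P₂ : 𝒳 → ℝ) : Set (ℝ × ℝ) :=
  {p | 0 ≤ p.1 ∧ 0 ≤ p.2 ∧
    ∃ l ∈ Set.Icc (0:ℝ) 1,
      p.1 ≤ kl (tilt P₁ P₂ l) P₁ ∧ p.2 ≤ kl (tilt P₁ P₂ l) P₂}

/-- `E₁(γ) = max{D(P^(λ)‖P₁) : λ ∈ [0,1], D(P^(λ)‖P₂) ≥ γ}` (sup of the empty set is 0). -/
noncomputable def E1exp (P₁ P₂ : 𝒳 → ℝ) (γ : ℝ) : ℝ :=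
  sSup {E | ∃ l ∈ Set.Icc (0:ℝ) 1, γ ≤ kl (tilt P₁ P₂ l) P₂ ∧ E = kl (tilt P₁ P₂ l) P₁}

/-- `E₂(γ) = max{D(P^(λ)‖P₂) : λ ∈ [0,1], D(P^(λ)‖P₁) ≥ γ}` (sup of the empty set is 0). -/
noncomputable def E2exp (P₁ P₂ : 𝒳 → ℝ) (γ : ℝ) : ℝ :=
  sSup {E | ∃ l ∈ Set.Icc (0:ℝ) 1, γ ≤ kl (tilt P₁ P₂ l) P₁ ∧ E = kl (tilt P₁ P₂ l) P₂}

/-- A sequential hypothesis test whose stopping time is bounded by `N`: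
a stopping time `τ` for the coordinate filtration, together with decision events
`A1`, `A2` that are determined by the samples observed up to time `τ`,
are disjoint, and exhaust the sample space. -/
structure HypTest (𝒳 : Type*) (N : ℕ) where
  τ : (Fin N → 𝒳) → ℕ
  A1 : Set (Fin N → 𝒳)
  A2 : Set (Fin N → 𝒳)
  tau_le : ∀ ω, τ ω ≤ N
  stopping : ∀ ω ω', (∀ i : Fin N, (i : ℕ) < τ ω → ω i = ω' i) → τ ω' = τ ω
  adapted1 : ∀ ω ω', (∀ i : Fin N, (i : ℕ) < τ ω → ω i = ω' i) → (ω ∈ A1 ↔ ω' ∈ A1)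
  adapted2 : ∀ ω ω', (∀ i : Fin N, (i : ℕ) < τ ω → ω i = ω' i) → (ω ∈ A2 ↔ ω' ∈ A2)
  disj : Disjoint A1 A2
  exhaust : A1 ∪ A2 = Set.univ

/-- `(E₁, E₂)` is achievable by `γ`-almost-fixed-length tests. -/
def AFLAchievable (P₁ P₂ : 𝒳 → ℝ) (γ E₁ E₂ : ℝ) : Prop :=
  0 ≤ E₁ ∧ 0 ≤ E₂ ∧
  ∃ c : ℝ, 0 < c ∧ ∃ l : ℕ, 0 < l ∧
    ∀ δ : ℝ, 0 < δ → ∃ n₀ : ℕ, ∀ n : ℕ, n₀ ≤ n →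
      ∃ N : ℕ, (N : ℝ) ≤ c * (n : ℝ) ^ l ∧
        ∃ T : HypTest 𝒳 N,
          prodProb P₁ {ω | n < T.τ ω} ≤ Real.exp (-(γ * n)) ∧
          prodProb P₂ {ω | n < T.τ ω} ≤ Real.exp (-(γ * n)) ∧
          prodProb P₁ T.A2 ≤ Real.exp (-((E₁ - δ) * n)) ∧
          prodProb P₂ T.A1 ≤ Real.exp (-((E₂ - δ) * n))

/-- `(E₁, E₂, E_Ω)` is achievable by fixed-length tests with a rejection option. -/
def RejAchievable (P₁ P₂ : 𝒳 → ℝ) (E₁ E₂ EΩ : ℝ) : Prop :=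
  0 ≤ E₁ ∧ 0 ≤ E₂ ∧ 0 ≤ EΩ ∧
  ∀ δ : ℝ, 0 < δ → ∃ n₀ : ℕ, ∀ n : ℕ, n₀ ≤ n →
    ∃ A1 A2 AΩ : Set (Fin n → 𝒳),
      Disjoint A1 A2 ∧ Disjoint A1 AΩ ∧ Disjoint A2 AΩ ∧ A1 ∪ A2 ∪ AΩ = Set.univ ∧
      prodProb P₁ A2 ≤ Real.exp (-((E₁ - δ) * n)) ∧
      prodProb P₂ A1 ≤ Real.exp (-((E₂ - δ) * n)) ∧
      prodProb P₁ AΩ + prodProb P₂ AΩ ≤ Real.exp (-((EΩ - δ) * n))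

/-- Sum of the log-likelihood ratios of the first `n` samples. -/
noncomputable def S1 (P₁ P₂ : 𝒳 → ℝ) (n : ℕ) {N : ℕ} (ω : Fin N → 𝒳) : ℝ :=
  ∑ i ∈ Finset.univ.filter (fun i : Fin N => (i : ℕ) < n),
    Real.log (P₁ (ω i) / P₂ (ω i))

/-- Sum of the log-likelihood ratios of the samples after time `n`. -/
noncomputable def S2 (P₁ P₂ : 𝒳 → ℝ) (n : ℕ) {N : ℕ} (ω : Fin N → 𝒳) : ℝ :=
  ∑ i ∈ Finset.univ.filter (fun i : Fin N => n ≤ (i : ℕ)),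
    Real.log (P₁ (ω i) / P₂ (ω i))

/-- Event that the two-phase test (phase-one thresholds `α₁ > β₁`, phase-two threshold `α`)
chooses `H₁`. -/
def twoPhaseA1 (P₁ P₂ : 𝒳 → ℝ) (k n : ℕ) (α₁ β₁ α : ℝ) : Set (Fin ((k + 1) * n) → 𝒳) :=
  {ω | α₁ ≤ S1 P₁ P₂ n ω / n ∨
    (β₁ < S1 P₁ P₂ n ω / n ∧ S1 P₁ P₂ n ω / n < α₁ ∧ α ≤ S2 P₁ P₂ n ω / (k * n))}

/-- Event that the two-phase test chooses `H₂`. -/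
def twoPhaseA2 (P₁ P₂ : 𝒳 → ℝ) (k n : ℕ) (α₁ β₁ α : ℝ) : Set (Fin ((k + 1) * n) → 𝒳) :=
  {ω | S1 P₁ P₂ n ω / n ≤ β₁ ∨
    (β₁ < S1 P₁ P₂ n ω / n ∧ S1 P₁ P₂ n ω / n < α₁ ∧ S2 P₁ P₂ n ω / (k * n) < α)}

/-- Stopping time of the two-phase test: `n` if phase one is decisive, `(k+1)n` otherwise. -/
noncomputable def twoPhaseTau (P₁ P₂ : 𝒳 → ℝ) (k n : ℕ) (α₁ β₁ : ℝ)
    (ω : Fin ((k + 1) * n) → 𝒳) : ℕ :=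
  if β₁ < S1 P₁ P₂ n ω / n ∧ S1 P₁ P₂ n ω / n < α₁ then (k + 1) * n else n

/-
Before time `n` the test stops unless the phase-one average `S₁/n` of the log-likelihood ratio
lies strictly between `β₁` and `α₁`, so `P₁(τ > n) ≤ P₁(S₁ ≤ n α₁)` and `P₂(τ > n) ≤ P₂(S₁ ≥ n β₁)`.
Both are Chernoff bounds, proved by a change of measure: replacing the law of the first `n` samples
by the tilted law `Q = P^(λ₂)` costs the likelihood ratio `∏ P₁/Q = exp(λ₂ S₁ + n log Z)`, `Z` the
normalizer of the tilt, and on `{S₁ ≤ n α₁}` this is at most `exp(−n D(Q‖P₁))` because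
`D(Q‖P₁) = −λ₂ α₁ − log Z`. The bound under `P₂` is the same one with the roles of `P₁` and `P₂`
exchanged, which turns `λ` into `1 − λ` and `S₁` into `−S₁`.
-/

section

variable {α : Type*}

lemma prod_eq_prod_div_mul_prod_ite {P Q : α → ℝ} (hQ : ∀ x, Q x ≠ 0) {N : ℕ}
    (s : Finset (Fin N)) (ω : Fin N → α) :
    ∏ i, P (ω i) =
      (∏ i ∈ s, P (ω i) / Q (ω i)) * ∏ i, if i ∈ s then Q (ω i) else P (ω i) := by
  rw [← Finset.prod_mul_prod_compl s, ← Finset.prod_mul_prod_compl s (fun i => ite _ _ _),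
    Finset.prod_congr rfl fun i hi => if_pos hi,
    Finset.prod_congr rfl fun i hi => if_neg (Finset.mem_compl.mp hi),
    ← mul_assoc, ← Finset.prod_mul_distrib]
  congr 1
  exact Finset.prod_congr rfl fun i _ => (div_mul_cancel₀ _ (hQ _)).symm

lemma S1_swap (P₁ P₂ : α → ℝ) (n : ℕ) {N : ℕ} (ω : Fin N → α) :
    S1 P₂ P₁ n ω = -S1 P₁ P₂ n ω := by
  simp only [S1, ← Finset.sum_neg_distrib, ← Real.log_inv, inv_div]

section Fintype

variable [Fintype α]

lemma prodProb_mono {P : α → ℝ} (hP : ∀ x, 0 ≤ P x) {N : ℕ} {S T : Set (Fin N → α)}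
    (hST : S ⊆ T) : prodProb P S ≤ prodProb P T :=
  Finset.sum_le_sum fun _ _ =>
    Set.indicator_le_indicator_of_subset hST (fun _ => Finset.prod_nonneg fun _ _ => hP _) _

/-- Change of measure: on the coordinates in `s` the law `P` is replaced by `Q`, at the price of
the likelihood ratio `∏ P/Q`. -/
lemma prodProb_le_of_prod_div_le {P Q : α → ℝ} (hP : ∀ x, 0 ≤ P x) (hQ : ∀ x, 0 < Q x)
    (hPs : ∑ x, P x = 1) (hQs : ∑ x, Q x = 1) {N : ℕ} (s : Finset (Fin N))
    {S : Set (Fin N → α)} {c : ℝ} (hc : 0 ≤ c)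
    (hS : ∀ ω ∈ S, ∏ i ∈ s, P (ω i) / Q (ω i) ≤ c) :
    prodProb P S ≤ c := by
  set R : Fin N → α → ℝ := fun i x => if i ∈ s then Q x else P x
  have hR : ∀ i x, 0 ≤ R i x := fun i x => by
    by_cases hi : i ∈ s <;> simp [R, hi, (hQ x).le, hP x]
  have hRs : ∀ i, ∑ x, R i x = 1 := fun i => by
    by_cases hi : i ∈ s <;> simp [R, hi, hPs, hQs]
  have hpoint : ∀ ω, S.indicator (fun ω' => ∏ i, P (ω' i)) ω ≤ c * ∏ i, R i (ω i) := by
    intro ω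
    by_cases hω : ω ∈ S
    · rw [Set.indicator_of_mem hω, prod_eq_prod_div_mul_prod_ite (fun x => (hQ x).ne') s ω]
      exact mul_le_mul_of_nonneg_right (hS ω hω) (Finset.prod_nonneg fun i _ => hR i _)
    · rw [Set.indicator_of_notMem hω]
      exact mul_nonneg hc (Finset.prod_nonneg fun i _ => hR i _)
  calc prodProb P S ≤ ∑ ω : Fin N → α, c * ∏ i, R i (ω i) :=
        Finset.sum_le_sum fun ω _ => hpoint ω
    _ = c * ∏ i, ∑ x, R i x := by rw [← Finset.mul_sum, Fintype.prod_sum]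
    _ = c := by simp [hRs]

lemma kl_eq_of_log_div_eq {Q P : α → ℝ} (hQs : ∑ x, Q x = 1) {g : α → ℝ} {a b : ℝ}
    (h : ∀ x, Real.log (P x / Q x) = a * g x + b) :
    kl Q P = -(a * ∑ x, Q x * g x + b) := by
  have hterm : ∀ x, Q x * Real.log (Q x / P x) = -(a * (Q x * g x) + b * Q x) := fun x => by
    rw [← inv_div, Real.log_inv, h]; ring
  simp only [kl, hterm, Finset.sum_neg_distrib, Finset.sum_add_distrib, ← Finset.mul_sum,
    hQs, mul_one]

lemma tilt_swap (P₁ P₂ : α → ℝ) (l : ℝ) : tilt P₂ P₁ (1 - l) = tilt P₁ P₂ l := by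
  ext x
  simp only [tilt, sub_sub_cancel]
  rw [mul_comm]
  exact congrArg _ (Finset.sum_congr rfl fun a _ => mul_comm _ _)

section Tilt

variable [Nonempty α] {P₁ P₂ : α → ℝ}

lemma sum_rpow_mul_rpow_pos (h1pos : ∀ x, 0 < P₁ x) (h2pos : ∀ x, 0 < P₂ x) (l : ℝ) :
    0 < ∑ a, P₁ a ^ (1 - l) * P₂ a ^ l :=
  Finset.sum_pos (fun a _ => by have := h1pos a; have := h2pos a; positivity)
    Finset.univ_nonempty

lemma tilt_pos (h1pos : ∀ x, 0 < P₁ x) (h2pos : ∀ x, 0 < P₂ x) (l : ℝ) (x : α) :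
    0 < tilt P₁ P₂ l x := by
  have := h1pos x; have := h2pos x; have := sum_rpow_mul_rpow_pos h1pos h2pos l
  unfold tilt; positivity

lemma sum_tilt (h1pos : ∀ x, 0 < P₁ x) (h2pos : ∀ x, 0 < P₂ x) (l : ℝ) :
    ∑ x, tilt P₁ P₂ l x = 1 := by
  simp only [tilt]
  rw [← Finset.sum_div, div_self (sum_rpow_mul_rpow_pos h1pos h2pos l).ne']

lemma log_div_tilt_left (h1pos : ∀ x, 0 < P₁ x) (h2pos : ∀ x, 0 < P₂ x) (l : ℝ) (x : α) :
    Real.log (P₁ x / tilt P₁ P₂ l x) =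
      l * Real.log (P₁ x / P₂ x) + Real.log (∑ a, P₁ a ^ (1 - l) * P₂ a ^ l) := by
  have h1 := h1pos x; have h2 := h2pos x; have hZ := sum_rpow_mul_rpow_pos h1pos h2pos l
  rw [tilt, div_div_eq_mul_div, Real.log_div (by positivity) (by positivity),
    Real.log_mul h1.ne' hZ.ne', Real.log_mul (by positivity) (by positivity),
    Real.log_rpow h1, Real.log_rpow h2, Real.log_div h1.ne' h2.ne']
  ring

lemma log_div_tilt_right (h1pos : ∀ x, 0 < P₁ x) (h2pos : ∀ x, 0 < P₂ x) (l : ℝ) (x : α) :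
    Real.log (P₂ x / tilt P₁ P₂ l x) =
      (l - 1) * Real.log (P₁ x / P₂ x) + Real.log (∑ a, P₁ a ^ (1 - l) * P₂ a ^ l) := by
  have h1 := h1pos x; have h2 := h2pos x; have hQ := tilt_pos h1pos h2pos l x
  have hleft := log_div_tilt_left h1pos h2pos l x
  rw [Real.log_div h1.ne' hQ.ne', Real.log_div h1.ne' h2.ne'] at hleft
  rw [Real.log_div h2.ne' hQ.ne', Real.log_div h1.ne' h2.ne']
  linarith

lemma kl_tilt_left_eq (h1pos : ∀ x, 0 < P₁ x) (h2pos : ∀ x, 0 < P₂ x) (l : ℝ) :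
    kl (tilt P₁ P₂ l) P₁ =
      -(l * (kl (tilt P₁ P₂ l) P₂ - kl (tilt P₁ P₂ l) P₁) +
        Real.log (∑ a, P₁ a ^ (1 - l) * P₂ a ^ l)) := by
  rw [kl_eq_of_log_div_eq (sum_tilt h1pos h2pos l) (log_div_tilt_right h1pos h2pos l),
    kl_eq_of_log_div_eq (sum_tilt h1pos h2pos l) (log_div_tilt_left h1pos h2pos l)]
  ring

lemma prodProb_S1_le_mul_le_exp (h1pos : ∀ x, 0 < P₁ x) (h2pos : ∀ x, 0 < P₂ x)
    (h1sum : ∑ x, P₁ x = 1) {l : ℝ} (hl : 0 ≤ l) {n N : ℕ} (hnN : n ≤ N) :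
    prodProb P₁ {ω : Fin N → α |
        S1 P₁ P₂ n ω ≤ (kl (tilt P₁ P₂ l) P₂ - kl (tilt P₁ P₂ l) P₁) * n}
      ≤ Real.exp (-(kl (tilt P₁ P₂ l) P₁ * n)) := by
  set Z := ∑ a, P₁ a ^ (1 - l) * P₂ a ^ l
  refine prodProb_le_of_prod_div_le (fun x => (h1pos x).le) (tilt_pos h1pos h2pos l) h1sum
    (sum_tilt h1pos h2pos l) {i | (i : ℕ) < n} (Real.exp_pos _).le fun ω hω => ?_
  calc ∏ i ∈ {i : Fin N | (i : ℕ) < n}, P₁ (ω i) / tilt P₁ P₂ l (ω i)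
      = ∏ i ∈ {i : Fin N | (i : ℕ) < n},
          Real.exp (l * Real.log (P₁ (ω i) / P₂ (ω i)) + Real.log Z) :=
        Finset.prod_congr rfl fun i _ => by
          rw [← log_div_tilt_left h1pos h2pos,
            Real.exp_log (div_pos (h1pos _) (tilt_pos h1pos h2pos l _))]
    _ = Real.exp (l * S1 P₁ P₂ n ω + n * Real.log Z) := by
        rw [← Real.exp_sum, Finset.sum_add_distrib, ← Finset.mul_sum, Finset.sum_const,
          Fin.card_filter_val_lt, min_eq_right hnN, nsmul_eq_mul]
        rfl
    _ ≤ Real.exp (-(kl (tilt P₁ P₂ l) P₁ * n)) := by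
        rw [Real.exp_le_exp, kl_tilt_left_eq h1pos h2pos l]
        linarith [mul_le_mul_of_nonneg_left (Set.mem_ofPred_eq ▸ hω) hl]

lemma prodProb_mul_le_S1_le_exp (h1pos : ∀ x, 0 < P₁ x) (h2pos : ∀ x, 0 < P₂ x)
    (h2sum : ∑ x, P₂ x = 1) {l : ℝ} (hl : l ≤ 1) {n N : ℕ} (hnN : n ≤ N) :
    prodProb P₂ {ω : Fin N → α |
        (kl (tilt P₁ P₂ l) P₂ - kl (tilt P₁ P₂ l) P₁) * n ≤ S1 P₁ P₂ n ω}
      ≤ Real.exp (-(kl (tilt P₁ P₂ l) P₂ * n)) := by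
  have hswapped := prodProb_S1_le_mul_le_exp h2pos h1pos h2sum (sub_nonneg.mpr hl) hnN
  rw [tilt_swap] at hswapped
  convert hswapped using 2
  ext ω
  rw [Set.mem_ofPred_eq, Set.mem_ofPred_eq, S1_swap]
  constructor <;> intro h <;> linarith

end Tilt

end Fintype

lemma S1_mem_Ioo_of_lt_twoPhaseTau {P₁ P₂ : α → ℝ} {k n : ℕ} (hn : 1 ≤ n) {α₁ β₁ : ℝ}
    {ω : Fin ((k + 1) * n) → α} (hτ : n < twoPhaseTau P₁ P₂ k n α₁ β₁ ω) :
    S1 P₁ P₂ n ω ∈ Set.Ioo (β₁ * n) (α₁ * n) := by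
  have hn' : (0 : ℝ) < n := by exact_mod_cast hn
  unfold twoPhaseTau at hτ
  split_ifs at hτ with hcont
  · exact ⟨(lt_div_iff₀ hn').mp hcont.1, (div_lt_iff₀ hn').mp hcont.2⟩
  · exact absurd hτ (lt_irrefl n)

lemma twoPhaseTau_le {P₁ P₂ : α → ℝ} {k n : ℕ} {α₁ β₁ : ℝ} (ω : Fin ((k + 1) * n) → α) :
    twoPhaseTau P₁ P₂ k n α₁ β₁ ω ≤ (k + 1) * n := by
  unfold twoPhaseTau
  split_ifs
  exacts [le_rfl, Nat.le_mul_of_pos_left n k.succ_pos]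

end

theorem twoPhase_tau_tail_general (P₁ P₂ : 𝒳 → ℝ)
    (h1pos : ∀ x, 0 < P₁ x) (h2pos : ∀ x, 0 < P₂ x)
    (h1sum : ∑ x, P₁ x = 1) (h2sum : ∑ x, P₂ x = 1)
    (γ : ℝ)
    (k : ℕ)
    (l₁ l₂ : ℝ)
    (hl₁ : l₁ ∈ Set.Icc (0:ℝ) 1) (hl₂ : l₂ ∈ Set.Icc (0:ℝ) 1)
    (hmin : min (kl (tilt P₁ P₂ l₁) P₂) (kl (tilt P₁ P₂ l₂) P₁) = γ) :
    ∀ n : ℕ, 1 ≤ n →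
      (prodProb P₁ {ω : Fin ((k + 1) * n) → 𝒳 | n < twoPhaseTau P₁ P₂ k n
            (kl (tilt P₁ P₂ l₂) P₂ - kl (tilt P₁ P₂ l₂) P₁)
            (kl (tilt P₁ P₂ l₁) P₂ - kl (tilt P₁ P₂ l₁) P₁) ω}
          ≤ Real.exp (-(kl (tilt P₁ P₂ l₂) P₁ * n)) ∧
        Real.exp (-(kl (tilt P₁ P₂ l₂) P₁ * n)) ≤ Real.exp (-(γ * n))) ∧
      (prodProb P₂ {ω : Fin ((k + 1) * n) → 𝒳 | n < twoPhaseTau P₁ P₂ k n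
            (kl (tilt P₁ P₂ l₂) P₂ - kl (tilt P₁ P₂ l₂) P₁)
            (kl (tilt P₁ P₂ l₁) P₂ - kl (tilt P₁ P₂ l₁) P₁) ω}
          ≤ Real.exp (-(kl (tilt P₁ P₂ l₁) P₂ * n)) ∧
        Real.exp (-(kl (tilt P₁ P₂ l₁) P₂ * n)) ≤ Real.exp (-(γ * n))) ∧
      (∀ ω : Fin ((k + 1) * n) → 𝒳,
        twoPhaseTau P₁ P₂ k n
            (kl (tilt P₁ P₂ l₂) P₂ - kl (tilt P₁ P₂ l₂) P₁)
            (kl (tilt P₁ P₂ l₁) P₂ - kl (tilt P₁ P₂ l₁) P₁) ω ≤ (k + 1) * n) := by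
  intro n hn
  have hnN : n ≤ (k + 1) * n := Nat.le_mul_of_pos_left n k.succ_pos
  have hexp : ∀ {E : ℝ}, γ ≤ E → Real.exp (-(E * n)) ≤ Real.exp (-(γ * n)) := fun hE =>
    Real.exp_le_exp.mpr (neg_le_neg (mul_le_mul_of_nonneg_right hE n.cast_nonneg))
  refine ⟨⟨?_, hexp (hmin ▸ min_le_right _ _)⟩, ⟨?_, hexp (hmin ▸ min_le_left _ _)⟩,
    twoPhaseTau_le⟩
  · refine (prodProb_mono (fun x => (h1pos x).le) fun ω hω => ?_).trans
      (prodProb_S1_le_mul_le_exp h1pos h2pos h1sum hl₂.1 hnN)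
    exact (S1_mem_Ioo_of_lt_twoPhaseTau hn hω).2.le
  · refine (prodProb_mono (fun x => (h2pos x).le) fun ω hω => ?_).trans
      (prodProb_mul_le_S1_le_exp h1pos h2pos h2sum hl₁.2 hnN)
    exact (S1_mem_Ioo_of_lt_twoPhaseTau hn hω).1.le

/-- The stopping time of the two-phase test exceeds `n` with probability at most
`e^{−D(P^(l₂)‖P₁)n} ≤ e^{−γn}` under `H₁` (resp. `e^{−D(P^(l₁)‖P₂)n} ≤ e^{−γn}` under `H₂`),
and is always bounded by `(k+1)n`. -/
theorem twoPhase_tau_tail (P₁ P₂ : 𝒳 → ℝ)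
    (h1pos : ∀ x, 0 < P₁ x) (h2pos : ∀ x, 0 < P₂ x)
    (h1sum : ∑ x, P₁ x = 1) (h2sum : ∑ x, P₂ x = 1)
    (hne : P₁ ≠ P₂)
    (ls : ℝ) (hls : ls ∈ Set.Icc (0:ℝ) 1)
    (hchern : kl (tilt P₁ P₂ ls) P₁ = kl (tilt P₁ P₂ ls) P₂)
    (γ : ℝ) (hγ0 : 0 < γ) (hγD : γ ≤ kl (tilt P₁ P₂ ls) P₁)
    (k : ℕ) (hk : 0 < k)
    (l₁ l₂ : ℝ)
    (hl₁ : l₁ ∈ Set.Icc (0:ℝ) 1) (hl₂ : l₂ ∈ Set.Icc (0:ℝ) 1) (hord : l₂ ≤ l₁)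
    (hmin : min (kl (tilt P₁ P₂ l₁) P₂) (kl (tilt P₁ P₂ l₂) P₁) = γ) :
    ∀ n : ℕ, 1 ≤ n →
      (prodProb P₁ {ω : Fin ((k + 1) * n) → 𝒳 | n < twoPhaseTau P₁ P₂ k n
            (kl (tilt P₁ P₂ l₂) P₂ - kl (tilt P₁ P₂ l₂) P₁)
            (kl (tilt P₁ P₂ l₁) P₂ - kl (tilt P₁ P₂ l₁) P₁) ω}
          ≤ Real.exp (-(kl (tilt P₁ P₂ l₂) P₁ * n)) ∧
        Real.exp (-(kl (tilt P₁ P₂ l₂) P₁ * n)) ≤ Real.exp (-(γ * n))) ∧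
      (prodProb P₂ {ω : Fin ((k + 1) * n) → 𝒳 | n < twoPhaseTau P₁ P₂ k n
            (kl (tilt P₁ P₂ l₂) P₂ - kl (tilt P₁ P₂ l₂) P₁)
            (kl (tilt P₁ P₂ l₁) P₂ - kl (tilt P₁ P₂ l₁) P₁) ω}
          ≤ Real.exp (-(kl (tilt P₁ P₂ l₁) P₂ * n)) ∧
        Real.exp (-(kl (tilt P₁ P₂ l₁) P₂ * n)) ≤ Real.exp (-(γ * n))) ∧
      (∀ ω : Fin ((k + 1) * n) → 𝒳,
        twoPhaseTau P₁ P₂ k n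
            (kl (tilt P₁ P₂ l₂) P₂ - kl (tilt P₁ P₂ l₂) P₁)
            (kl (tilt P₁ P₂ l₁) P₂ - kl (tilt P₁ P₂ l₁) P₁) ω ≤ (k + 1) * n) :=
  twoPhase_tau_tail_general P₁ P₂ h1pos h2pos h1sum h2sum γ k l₁ l₂ hl₁ hl₂ hmin
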